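/- arXiv:2507.21282 — 4 statements merged into one kernel-verified Lean document; each statement's English description precedes it below -/
import Mathlib

section
/- Let k ≥ 2 be an integer. If (z₁,z₂,z₃) and (z₁',z₂',z₃') both lie in Z_k and q(z₁,z₂,z₃) = q(z₁',z₂',z₃'), then there exist φ₁, φ₂ ∈ ℝ such that (z₁',z₂',z₃') = (e^{2πiφ₁}·z₁, e^{2πiφ₂}·z₂, e^{2πi(kφ₁−φ₂)}·z₃). Conversely, for any (z₁,z₂,z₃) ∈ Z_k and φ₁, φ₂ ∈ ℝ, the point (e^{2πiφ₁}·z₁, e^{2πiφ₂}·z₂, e^{2πi(kφ₁−φ₂)}·z₃) lies in Z_k and has the same value of q. Hence the fibers of q restricted to Z_k are exactly the T²-orbits. -/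
open Complex

/-- `q(z₁,z₂,z₃) = (conj z₁)^k · z₂ · z₃ / (|z₁|^k · |z₂|)`. -/
noncomputable def qmap (k : ℕ) (z : ℂ × ℂ × ℂ) : ℂ :=
  (starRingEnd ℂ z.1) ^ k * z.2.1 * z.2.2 /
    (((‖z.1‖ : ℝ) : ℂ) ^ k * ((‖z.2.1‖ : ℝ) : ℂ))

/-- The level set `Z_k = {(z₁,z₂,z₃) : |z₁|² + k|z₃|² = 1, |z₂| = |z₃|, z₁ ≠ 0, z₂ ≠ 0}`. -/
def Zk (k : ℕ) : Set (ℂ × ℂ × ℂ) :=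
  {z | ‖z.1‖ ^ 2 + (k : ℝ) * ‖z.2.2‖ ^ 2 = 1 ∧
       ‖z.2.1‖ = ‖z.2.2‖ ∧ z.1 ≠ 0 ∧ z.2.1 ≠ 0}

/-- The `T²`-action `(φ₁,φ₂)·(z₁,z₂,z₃) = (e^{2πiφ₁}z₁, e^{2πiφ₂}z₂, e^{2πi(kφ₁-φ₂)}z₃)`. -/
noncomputable def torusAct (k : ℕ) (φ₁ φ₂ : ℝ) (z : ℂ × ℂ × ℂ) : ℂ × ℂ × ℂ :=
  (Complex.exp (2 * Real.pi * Complex.I * (φ₁ : ℂ)) * z.1,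
   Complex.exp (2 * Real.pi * Complex.I * (φ₂ : ℂ)) * z.2.1,
   Complex.exp (2 * Real.pi * Complex.I * (((k : ℝ) * φ₁ - φ₂ : ℝ) : ℂ)) * z.2.2)

noncomputable def E (r : ℝ) : ℂ := Complex.exp (2 * Real.pi * Complex.I * (r : ℂ))

lemma E_ne (r : ℝ) : E r ≠ 0 := Complex.exp_ne_zero _

lemma E_abs (r : ℝ) : ‖E r‖ = 1 := by
  rw [E, Complex.norm_exp]
  have : (2 * Real.pi * Complex.I * (r : ℂ)).re = 0 := by simp
  rw [this, Real.exp_zero]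

lemma E_mul (a b : ℝ) : E a * E b = E (a + b) := by
  rw [E, E, E, ← Complex.exp_add]; congr 1; push_cast; ring

lemma E_conj (r : ℝ) : (starRingEnd ℂ) (E r) = E (-r) := by
  rw [E, E, ← Complex.exp_conj]; congr 1
  rw [map_mul, map_mul, map_mul, Complex.conj_I]; push_cast [Complex.conj_ofReal, map_ofNat]; ring

lemma E_pow (n : ℕ) (r : ℝ) : E r ^ n = E (n * r) := by
  rw [E, E, ← Complex.exp_nat_mul]; congr 1; push_cast; ring

lemma E_zero : E 0 = 1 := by simp [E]

lemma exists_E {w : ℂ} (hw : ‖w‖ = 1) : ∃ φ : ℝ, w = E φ := by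
  refine ⟨Complex.arg w / (2 * Real.pi), ?_⟩
  have h2 : (2 * Real.pi * Complex.I * ((Complex.arg w / (2 * Real.pi) : ℝ) : ℂ))
      = (Complex.arg w : ℂ) * Complex.I := by
    have hπc : (Real.pi : ℂ) ≠ 0 := by exact_mod_cast Real.pi_ne_zero
    push_cast
    field_simp
  rw [E, h2, Complex.exp_mul_I]
  have h3 := Complex.norm_mul_cos_add_sin_mul_I w
  rw [hw] at h3; simpa using h3.symm

lemma torusAct_E (k : ℕ) (φ₁ φ₂ : ℝ) (z : ℂ × ℂ × ℂ) :
    torusAct k φ₁ φ₂ z = (E φ₁ * z.1, E φ₂ * z.2.1, E ((k : ℝ) * φ₁ - φ₂) * z.2.2) := rfl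

lemma abs_qmap (k : ℕ) {z : ℂ × ℂ × ℂ} (h1 : z.1 ≠ 0) (h2 : z.2.1 ≠ 0) :
    ‖qmap k z‖ = ‖z.2.2‖ := by
  have h1' : ‖z.1‖ ≠ 0 := by simpa using h1
  have h2' : ‖z.2.1‖ ≠ 0 := by simpa using h2
  simp only [qmap, norm_div, norm_mul, norm_pow, Complex.norm_conj, Complex.norm_real, Real.norm_eq_abs,
    _root_.abs_of_nonneg (norm_nonneg z.1), _root_.abs_of_nonneg (norm_nonneg z.2.1)]
  field_simp

/-- On `Z_k`, two points have the same value of `q` iff they lie in the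
same `T²`-orbit: if `q(z) = q(z')` then `z' = (φ₁,φ₂)·z` for some `φ₁, φ₂ ∈ ℝ`, and
conversely every point of the orbit of `z ∈ Z_k` lies in `Z_k` with the same `q`-value. -/
theorem qmap_fibers_are_orbits (k : ℕ) (hk : 2 ≤ k) :
    (∀ z ∈ Zk k, ∀ z' ∈ Zk k, qmap k z = qmap k z' →
      ∃ φ₁ φ₂ : ℝ, z' = torusAct k φ₁ φ₂ z) ∧
    (∀ z ∈ Zk k, ∀ φ₁ φ₂ : ℝ,
      torusAct k φ₁ φ₂ z ∈ Zk k ∧ qmap k (torusAct k φ₁ φ₂ z) = qmap k z) := by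
  constructor
  · rintro z ⟨h1, h2, h3, h4⟩ z' ⟨h1', h2', h3', h4'⟩ hq
    -- moduli are equal
    have e3 : ‖z.2.2‖ = ‖z'.2.2‖ := by
      rw [← abs_qmap k h3 h4, ← abs_qmap k h3' h4', hq]
    have e2 : ‖z.2.1‖ = ‖z'.2.1‖ := by rw [h2, h2', e3]
    have e1 : ‖z.1‖ = ‖z'.1‖ := by
      have hsq : ‖z.1‖ ^ 2 = ‖z'.1‖ ^ 2 := by
        rw [e3] at h1; linarith
      have := norm_nonneg z.1
      have := norm_nonneg z'.1
      nlinarith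
    -- phases for the first two coordinates
    obtain ⟨φ₁, hφ₁⟩ : ∃ φ, z'.1 / z.1 = E φ := by
      apply exists_E
      rw [norm_div, ← e1, div_self (by simpa using h3)]
    obtain ⟨φ₂, hφ₂⟩ : ∃ φ, z'.2.1 / z.2.1 = E φ := by
      apply exists_E
      rw [norm_div, ← e2, div_self (by simpa using h4)]
    have hz1 : z'.1 = E φ₁ * z.1 := by rw [← hφ₁]; field_simp
    have hz2 : z'.2.1 = E φ₂ * z.2.1 := by rw [← hφ₂]; field_simp
    -- numerators of q agree
    have hden : (((‖z.1‖ : ℝ) : ℂ) ^ k * ((‖z.2.1‖ : ℝ) : ℂ)) ≠ 0 := by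
      apply mul_ne_zero
      · exact pow_ne_zero _ (by simpa [Complex.ofReal_eq_zero] using (by simpa using h3 : ‖z.1‖ ≠ 0))
      · exact_mod_cast (by simpa using h4 : ‖z.2.1‖ ≠ 0)
    have hnum : (starRingEnd ℂ z.1) ^ k * z.2.1 * z.2.2
        = (starRingEnd ℂ z'.1) ^ k * z'.2.1 * z'.2.2 := by
      have := hq
      rw [qmap, qmap, ← e1, ← e2, div_eq_div_iff hden hden] at this
      exact mul_right_cancel₀ hden (by linear_combination this)
    -- deduce the third coordinate
    have hc1 : starRingEnd ℂ z.1 ≠ 0 := by simpa using h3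
    have hz3 : z'.2.2 = E ((k : ℝ) * φ₁ - φ₂) * z.2.2 := by
      have hc : (starRingEnd ℂ) z'.1 ^ k = E (-((k:ℝ) * φ₁)) * (starRingEnd ℂ) z.1 ^ k := by
        rw [hz1, map_mul, E_conj, mul_pow, E_pow, show (k:ℝ) * -φ₁ = -((k:ℝ) * φ₁) from by ring]
      have key : (starRingEnd ℂ z.1 ^ k * z.2.1) * z.2.2
          = (starRingEnd ℂ z.1 ^ k * z.2.1) * (E (-((k:ℝ) * φ₁)) * E φ₂ * z'.2.2) := by
        rw [show (starRingEnd ℂ z.1 ^ k * z.2.1) * z.2.2 = starRingEnd ℂ z.1 ^ k * z.2.1 * z.2.2 from rfl,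
          hnum, hc, hz2]
        ring
      have h5 := mul_left_cancel₀ (mul_ne_zero (pow_ne_zero _ hc1) h4) key
      have hE : E (-((k:ℝ) * φ₁)) * E φ₂ * E ((k:ℝ) * φ₁ - φ₂) = 1 := by
        rw [E_mul, E_mul, show -((k:ℝ) * φ₁) + φ₂ + ((k:ℝ) * φ₁ - φ₂) = 0 by ring, E_zero]
      have : E ((k:ℝ) * φ₁ - φ₂) * z.2.2 = z'.2.2 := by
        rw [h5]
        calc E ((k:ℝ) * φ₁ - φ₂) * (E (-((k:ℝ) * φ₁)) * E φ₂ * z'.2.2)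
            = (E (-((k:ℝ) * φ₁)) * E φ₂ * E ((k:ℝ) * φ₁ - φ₂)) * z'.2.2 := by ring
          _ = z'.2.2 := by rw [hE, one_mul]
      exact this.symm
    exact ⟨φ₁, φ₂, by rw [torusAct_E]; ext <;> simp [hz1, hz2, hz3]⟩
  · rintro z ⟨h1, h2, h3, h4⟩ φ₁ φ₂
    rw [torusAct_E]
    have A1 : ‖E φ₁ * z.1‖ = ‖z.1‖ := by rw [norm_mul, E_abs, one_mul]
    have A2 : ‖E φ₂ * z.2.1‖ = ‖z.2.1‖ := by rw [norm_mul, E_abs, one_mul]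
    have A3 : ‖E ((k:ℝ) * φ₁ - φ₂) * z.2.2‖ = ‖z.2.2‖ := by
      rw [norm_mul, E_abs, one_mul]
    refine ⟨⟨?_, ?_, ?_, ?_⟩, ?_⟩
    · simpa [A1, A3, E_abs] using h1
    · simpa [A2, A3, E_abs] using h2
    · exact mul_ne_zero (E_ne _) h3
    · exact mul_ne_zero (E_ne _) h4
    · rw [qmap, qmap]
      simp only [A1, A2]
      congr 1
      rw [map_mul, E_conj, mul_pow, E_pow]
      have hE : E ((k:ℝ) * (-φ₁)) * E φ₂ * E ((k:ℝ) * φ₁ - φ₂) = 1 := by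
        rw [E_mul, E_mul, show (k:ℝ) * (-φ₁) + φ₂ + ((k:ℝ) * φ₁ - φ₂) = 0 by ring, E_zero]
      linear_combination ((starRingEnd ℂ) z.1 ^ k * z.2.1 * z.2.2) * hE
end

section
/- Let k ≥ 2 be an integer, Γ ⊆ {z ∈ ℂ : 0 < |z| < 1/√k}, and Υ := Υ_k(Γ). Let u₁, u₂, u₃, v : ℂ → ℂ be functions, let w₁,…,w_r ∈ ℂ with |w_j| < 1 for all j, and suppose u₂(z) = v(z)·∏_{j=1}^{r} f_{w_j}(z) for all z with |z| ≤ 1. If (u₁(z), u₂(z), u₃(z)) ∈ Υ for every z with |z| = 1, then (u₁(z), v(z), u₃(z)·∏_{j=1}^{r} f_{w_j}(z)) ∈ Υ for every z with |z| = 1, and at z = 1 this new triple equals (u₁(1), u₂(1), u₃(1)). -/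
open Complex BigOperators

/-- The Brendel torus `Υ_k(Γ)`. -/
def Upsilon (k : ℕ) (Γ : Set ℂ) : Set (ℂ × ℂ × ℂ) :=
  {ζ | ζ.1 ≠ 0 ∧ ζ.2.1 ≠ 0 ∧
       ‖ζ.1‖ ^ 2 + (k : ℝ) * ‖ζ.2.2‖ ^ 2 = 1 ∧
       ‖ζ.2.1‖ = ‖ζ.2.2‖ ∧ qmap k ζ ∈ Γ}

/-- The normalized Blaschke factor `f_w(z) = ((1 - conj w)/(1 - w)) · ((z - w)/(1 - (conj w)·z))`. -/
noncomputable def blaschke (w z : ℂ) : ℂ :=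
  ((1 - starRingEnd ℂ w) / (1 - w)) * ((z - w) / (1 - starRingEnd ℂ w * z))

lemma one_sub_ne_zero {w : ℂ} (hw : ‖w‖ < 1) : (1 : ℂ) - w ≠ 0 := by
  intro h
  have : w = 1 := by linear_combination -h
  simp [this] at hw

lemma blaschke_one {w : ℂ} (hw : ‖w‖ < 1) : blaschke w 1 = 1 := by
  have h1 : (1 : ℂ) - w ≠ 0 := one_sub_ne_zero hw
  have h2 : (1 : ℂ) - starRingEnd ℂ w ≠ 0 := one_sub_ne_zero (by simpa using hw)
  unfold blaschke
  rw [mul_one]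
  field_simp

lemma abs_blaschke {w z : ℂ} (hw : ‖w‖ < 1) (hz : ‖z‖ = 1) :
    ‖blaschke w z‖ = 1 := by
  have h1 : ‖1 - w‖ ≠ 0 :=
    norm_ne_zero_iff.mpr (one_sub_ne_zero hw)
  have h2 : ‖1 - starRingEnd ℂ w‖ = ‖1 - w‖ := by
    rw [← Complex.norm_conj (1 - w)]
    simp [map_sub]
  have hzz : starRingEnd ℂ z * z = 1 := by
    rw [mul_comm, Complex.mul_conj]
    norm_cast
    rw [Complex.normSq_eq_norm_sq, hz]; norm_num
  have h3 : ‖1 - starRingEnd ℂ w * z‖ = ‖z - w‖ := by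
    have : starRingEnd ℂ z * (1 - starRingEnd ℂ w * z) = starRingEnd ℂ (z - w) := by
      rw [map_sub]
      ring_nf
      rw [mul_comm (starRingEnd ℂ z) z] at hzz
      linear_combination -starRingEnd ℂ w * hzz
    calc ‖1 - starRingEnd ℂ w * z‖
        = ‖starRingEnd ℂ z‖ * ‖1 - starRingEnd ℂ w * z‖ := by
          simp [hz]
      _ = ‖starRingEnd ℂ z * (1 - starRingEnd ℂ w * z)‖ := (norm_mul _ _).symm
      _ = ‖z - w‖ := by rw [this, Complex.norm_conj]
  have h4 : ‖z - w‖ ≠ 0 := by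
    intro h
    have : z = w := by
      have := norm_eq_zero.mp h
      linear_combination this
    rw [this] at hz; rw [hz] at hw; exact lt_irrefl _ hw
  unfold blaschke
  rw [norm_mul, norm_div, norm_div, h2, h3, div_self h1, div_self h4, mul_one]

/-- Dividing the second component of a boundary map into `Υ_k(Γ)` by a
product of Blaschke factors and multiplying the third component by it preserves the
boundary condition on the unit circle and the value at `z = 1`. -/
theorem upsilon_blaschke_exchange (k : ℕ) (hk : 2 ≤ k)
    (Γ : Set ℂ) (hΓ : Γ ⊆ {z : ℂ | 0 < ‖z‖ ∧ ‖z‖ < 1 / Real.sqrt k})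
    (u₁ u₂ u₃ v : ℂ → ℂ) (r : ℕ) (w : Fin r → ℂ) (hw : ∀ j, ‖w j‖ < 1)
    (hfactor : ∀ z : ℂ, ‖z‖ ≤ 1 → u₂ z = v z * ∏ j, blaschke (w j) z)
    (hbdry : ∀ z : ℂ, ‖z‖ = 1 → (u₁ z, u₂ z, u₃ z) ∈ Upsilon k Γ) :
    (∀ z : ℂ, ‖z‖ = 1 →
      (u₁ z, v z, u₃ z * ∏ j, blaschke (w j) z) ∈ Upsilon k Γ) ∧
    (u₁ 1, v 1, u₃ 1 * ∏ j, blaschke (w j) 1) = (u₁ 1, u₂ 1, u₃ 1) := by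
  constructor
  · intro z hz
    obtain ⟨h1, h2, h3, h4, h5⟩ := hbdry z hz
    set P := ∏ j, blaschke (w j) z with hPdef
    have hP : ‖P‖ = 1 := by
      rw [hPdef, norm_prod]
      exact Finset.prod_eq_one fun j _ => abs_blaschke (hw j) hz
    have hu2 : u₂ z = v z * P := hfactor z hz.le
    have hv : v z ≠ 0 := fun h => h2 (by rw [hu2, h, zero_mul])
    have habs_v : ‖v z‖ = ‖u₂ z‖ := by
      rw [hu2, norm_mul, hP, mul_one]
    have hq : qmap k (u₁ z, v z, u₃ z * P) = qmap k (u₁ z, u₂ z, u₃ z) := by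
      simp only [qmap]
      rw [habs_v, hu2]
      ring
    refine ⟨h1, hv, ?_, ?_, ?_⟩
    · simp only [norm_mul, hP, mul_one]
      exact h3
    · simp only [norm_mul, hP, mul_one, habs_v]
      exact h4
    · exact hq ▸ h5
  · have h1 : ‖(1 : ℂ)‖ = 1 := by simp
    have hP : (∏ j, blaschke (w j) 1) = 1 :=
      Finset.prod_eq_one fun j _ => blaschke_one (hw j)
    have := hfactor 1 h1.le
    rw [hP, mul_one] at this
    rw [hP, mul_one, this]
end

section
/- Let k ≥ 2 be an integer and w₀ ∈ ℂ with k|w₀|² ≤ 1; define β₁ : ℂ → ℂ³ by β₁(z) := (√(1 − k|w₀|²)·z, |w₀|, w₀·z^k). Then for every z ∈ ℂ, β₁ is real-differentiable at z with ω_std(∂β₁/∂x(z), ∂β₁/∂y(z)) = (1 − k|w₀|²) + k²|w₀|²·|z|^{2(k−1)}, and the integral of this density over the open unit disk in ℂ with respect to Lebesgue measure equals π. -/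
open Complex MeasureTheory

/-- The standard symplectic form on `ℂ³ ≅ ℝ⁶`:
`ω_std(u,v) = Σ_j (Re u_j · Im v_j − Im u_j · Re v_j)`. -/
def omegaStd (u v : ℂ × ℂ × ℂ) : ℝ :=
  (u.1.re * v.1.im - u.1.im * v.1.re) +
  (u.2.1.re * v.2.1.im - u.2.1.im * v.2.1.re) +
  (u.2.2.re * v.2.2.im - u.2.2.im * v.2.2.re)

/-- The disk `β₁(z) = (√(1 − k|w₀|²)·z, |w₀|, w₀·z^k)`. -/
noncomputable def beta1Map (k : ℕ) (w₀ : ℂ) (z : ℂ) : ℂ × ℂ × ℂ :=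
  (((Real.sqrt (1 - (k : ℝ) * ‖w₀‖ ^ 2) : ℝ) : ℂ) * z,
   ((‖w₀‖ : ℝ) : ℂ), w₀ * z ^ k)

lemma omega_key (x : ℂ) : x.re * (Complex.I * x).im - x.im * (Complex.I * x).re
    = ‖x‖ ^ 2 := by
  rw [← Complex.normSq_eq_norm_sq, Complex.normSq_apply]
  simp [Complex.mul_re, Complex.mul_im]

lemma beta1_hasFDerivAt (k : ℕ) (w₀ : ℂ) (z : ℂ) :
    HasFDerivAt (beta1Map k w₀)
      (((ContinuousLinearMap.smulRight (1 : ℂ →L[ℂ] ℂ)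
          ((Real.sqrt (1 - (k : ℝ) * ‖w₀‖ ^ 2) : ℝ) : ℂ)).restrictScalars ℝ).prod
        ((0 : ℂ →L[ℝ] ℂ).prod
          ((ContinuousLinearMap.smulRight (1 : ℂ →L[ℂ] ℂ)
            (w₀ * (k * z ^ (k - 1)))).restrictScalars ℝ))) z := by
  have h1 : HasDerivAt (fun z : ℂ => ((Real.sqrt (1 - (k : ℝ) * ‖w₀‖ ^ 2) : ℝ) : ℂ) * z)
      ((Real.sqrt (1 - (k : ℝ) * ‖w₀‖ ^ 2) : ℝ) : ℂ) z := by
    simpa using (hasDerivAt_id z).const_mul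
      ((Real.sqrt (1 - (k : ℝ) * ‖w₀‖ ^ 2) : ℝ) : ℂ)
  have h3 : HasDerivAt (fun z : ℂ => w₀ * z ^ k) (w₀ * (k * z ^ (k - 1))) z :=
    (hasDerivAt_pow k z).const_mul w₀
  exact (h1.hasFDerivAt.restrictScalars ℝ).prodMk
    ((hasFDerivAt_const _ _).prodMk (h3.hasFDerivAt.restrictScalars ℝ))

open Set in
lemma beta1_integral_aux (k : ℕ) (hk : 2 ≤ k) (A B : ℝ) :
    (∫ z in Metric.ball (0 : ℂ) 1, (A + B * ‖z‖ ^ (2 * (k - 1))))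
      = 2 * Real.pi * (A / 2 + B / (2 * k)) := by
  obtain ⟨j, rfl⟩ : ∃ j, k = j + 2 := ⟨k - 2, by omega⟩
  rw [show 2 * (j + 2 - 1) = 2 * j + 2 from by omega]
  set m := 2 * j + 2 with hm
  set f : ℝ → ℝ := fun y => Set.indicator (Set.Iio 1) (fun y => A + B * y ^ m) y with hf
  have h1 : (∫ z in Metric.ball (0 : ℂ) 1, (A + B * ‖z‖ ^ m)) = ∫ z : ℂ, f ‖z‖ := by
    rw [← integral_indicator measurableSet_ball]
    congr 1; ext z
    simp only [hf, indicator, Metric.mem_ball, dist_zero_right, mem_Iio]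
  rw [h1, integral_fun_norm_addHaar volume f, Complex.finrank_real_complex,
    measureReal_def, Complex.volume_ball]
  have h2 : (∫ y in Ioi (0:ℝ), y ^ (2 - 1) • f y) = ∫ y in Ioo (0:ℝ) 1, (A * y + B * y ^ (m+1)) := by
    have e : ∀ y : ℝ, y ^ (2-1) • f y
        = Set.indicator (Set.Iio 1) (fun y => A * y + B * y ^ (m+1)) y := by
      intro y
      simp only [pow_one, smul_eq_mul, hf, indicator, mem_Iio]
      split_ifs <;> ring
    simp_rw [e]
    rw [setIntegral_indicator measurableSet_Iio, Ioi_inter_Iio]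
  rw [h2, ← integral_Ioc_eq_integral_Ioo,
    ← intervalIntegral.integral_of_le (by norm_num : (0:ℝ) ≤ 1)]
  have hInt1 : IntervalIntegrable (fun y : ℝ => A * y) volume 0 1 :=
    (continuous_const.mul continuous_id).intervalIntegrable 0 1
  have hInt2 : IntervalIntegrable (fun y : ℝ => B * y ^ (m+1)) volume 0 1 :=
    (continuous_const.mul (continuous_pow _)).intervalIntegrable 0 1
  rw [intervalIntegral.integral_add hInt1 hInt2, intervalIntegral.integral_const_mul,
    intervalIntegral.integral_const_mul, integral_id, integral_pow]
  have hm2 : m + 1 + 1 = 2 * (j + 2) := by omega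
  rw [hm2]
  have h2k : (0:ℝ) < 2 * (j + 2 : ℕ) := by positivity
  have : ((2:ℝ) * (j + 2 : ℕ)) ≠ 0 := ne_of_gt h2k
  rw [ENNReal.ofReal_one, one_pow (M := ENNReal), one_mul, ENNReal.coe_toReal, NNReal.coe_real_pi]
  simp only [one_pow, Nat.cast_mul, Nat.cast_ofNat]
  push_cast
  simp only [hm, Nat.cast_add, Nat.cast_mul, Nat.cast_ofNat]
  simp only [smul_eq_mul, zero_pow two_ne_zero, zero_pow (by omega : 2 * (j + 2) ≠ 0), sub_zero]
  have hj1 : (2 * (j:ℝ) + 2 + 1 + 1) ≠ 0 := by positivity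
  have hj2 : ((j:ℝ) + 2) ≠ 0 := by positivity
  rw [show (2 * (j:ℝ) + 2 + 1 + 1) = 2 * ((j:ℝ) + 2) by ring]
  ring

/-- For `k ≥ 2` and `k|w₀|² ≤ 1`, the map `β₁` is real-differentiable
everywhere with symplectic area density
`(1 − k|w₀|²) + k²|w₀|²·|z|^{2(k−1)}`, and the integral of this density over the open
unit disk equals `π`. -/
theorem beta1Map_area (k : ℕ) (hk : 2 ≤ k) (w₀ : ℂ)
    (hw₀ : (k : ℝ) * ‖w₀‖ ^ 2 ≤ 1) :
    (∀ z : ℂ, DifferentiableAt ℝ (beta1Map k w₀) z ∧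
      omegaStd (fderiv ℝ (beta1Map k w₀) z 1) (fderiv ℝ (beta1Map k w₀) z Complex.I)
        = (1 - (k : ℝ) * ‖w₀‖ ^ 2)
          + (k : ℝ) ^ 2 * ‖w₀‖ ^ 2 * ‖z‖ ^ (2 * (k - 1))) ∧
    (∫ z in Metric.ball (0 : ℂ) 1,
        ((1 - (k : ℝ) * ‖w₀‖ ^ 2)
          + (k : ℝ) ^ 2 * ‖w₀‖ ^ 2 * ‖z‖ ^ (2 * (k - 1))))
      = Real.pi := by
  constructor
  · intro z
    have H := beta1_hasFDerivAt k w₀ z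
    refine ⟨H.differentiableAt, ?_⟩
    rw [H.fderiv]
    simp only [omegaStd, ContinuousLinearMap.prod_apply, ContinuousLinearMap.coe_restrictScalars',
      ContinuousLinearMap.smulRight_apply, ContinuousLinearMap.one_apply,
      ContinuousLinearMap.zero_apply, smul_eq_mul, one_mul, Complex.zero_re, Complex.zero_im]
    rw [omega_key, omega_key]
    have hnn : (0:ℝ) ≤ 1 - (k : ℝ) * ‖w₀‖ ^ 2 := by linarith
    rw [Complex.norm_real, Real.norm_eq_abs, _root_.abs_of_nonneg (Real.sqrt_nonneg _), Real.sq_sqrt hnn]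
    have : ‖(w₀ * ((k:ℂ) * z ^ (k-1)))‖ ^ 2
        = (k : ℝ) ^ 2 * ‖w₀‖ ^ 2 * ‖z‖ ^ (2 * (k - 1)) := by
      simp only [norm_mul, norm_pow, Complex.norm_natCast]
      rw [mul_comm 2 (k-1), pow_mul]
      ring
    rw [this]
    ring
  · rw [beta1_integral_aux k hk]
    have hkne : (k : ℝ) ≠ 0 := by positivity
    field_simp
    ring
end

section
/- Let k ≥ 2 be an integer and w₀ ∈ ℂ with k|w₀|² ≤ 1; define β₂ : ℂ → ℂ³ by β₂(z) := (√(1 − k|w₀|²), |w₀|·z, w₀·conj(z)). Then for every z ∈ ℂ, β₂ is real-differentiable at z and ω_std(∂β₂/∂x(z), ∂β₂/∂y(z)) = 0. -/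
open Complex

/-- The disk `β₂(z) = (√(1 − k|w₀|²), |w₀|·z, w₀·conj z)`. -/
noncomputable def beta2Map (k : ℕ) (w₀ : ℂ) (z : ℂ) : ℂ × ℂ × ℂ :=
  (((Real.sqrt (1 - (k : ℝ) * ‖w₀‖ ^ 2) : ℝ) : ℂ),
   ((‖w₀‖ : ℝ) : ℂ) * z, w₀ * starRingEnd ℂ z)

noncomputable def beta2Deriv (k : ℕ) (w₀ : ℂ) : ℂ →L[ℝ] ℂ × ℂ × ℂ :=
  (0 : ℂ →L[ℝ] ℂ).prod
    (((ContinuousLinearMap.mul ℝ ℂ) ((‖w₀‖ : ℝ) : ℂ)).prod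
      (((ContinuousLinearMap.mul ℝ ℂ) w₀).comp
        (Complex.conjCLE.toContinuousLinearMap)))

lemma beta2_hasFDerivAt (k : ℕ) (w₀ : ℂ) (z : ℂ) :
    HasFDerivAt (beta2Map k w₀) (beta2Deriv k w₀) z := by
  have h1 : HasFDerivAt (fun _ : ℂ => (((Real.sqrt (1 - (k : ℝ) * ‖w₀‖ ^ 2) : ℝ) : ℂ)))
      (0 : ℂ →L[ℝ] ℂ) z := hasFDerivAt_const _ _
  have h2 : HasFDerivAt (fun z : ℂ => ((‖w₀‖ : ℝ) : ℂ) * z)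
      ((ContinuousLinearMap.mul ℝ ℂ) ((‖w₀‖ : ℝ) : ℂ)) z :=
    ((ContinuousLinearMap.mul ℝ ℂ) ((‖w₀‖ : ℝ) : ℂ)).hasFDerivAt
  have h3 : HasFDerivAt (fun z : ℂ => w₀ * starRingEnd ℂ z)
      (((ContinuousLinearMap.mul ℝ ℂ) w₀).comp (Complex.conjCLE.toContinuousLinearMap)) z :=
    (((ContinuousLinearMap.mul ℝ ℂ) w₀).comp (Complex.conjCLE.toContinuousLinearMap)).hasFDerivAt
  exact HasFDerivAt.prodMk h1 (HasFDerivAt.prodMk h2 h3)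

/-- For `k ≥ 2` and `k|w₀|² ≤ 1`, the map `β₂` is real-differentiable
at every `z` and its symplectic area density vanishes:
`ω_std(∂β₂/∂x(z), ∂β₂/∂y(z)) = 0`. -/
theorem beta2Map_zero_area_density (k : ℕ) (hk : 2 ≤ k) (w₀ : ℂ)
    (hw₀ : (k : ℝ) * ‖w₀‖ ^ 2 ≤ 1) (z : ℂ) :
    DifferentiableAt ℝ (beta2Map k w₀) z ∧
    omegaStd (fderiv ℝ (beta2Map k w₀) z 1) (fderiv ℝ (beta2Map k w₀) z Complex.I) = 0 := by
  have h := beta2_hasFDerivAt k w₀ z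
  refine ⟨h.differentiableAt, ?_⟩
  rw [h.fderiv]
  simp [beta2Deriv, omegaStd, Complex.ext_iff, mul_comm, mul_assoc]
  ring_nf
  rw [Complex.sq_norm, Complex.normSq_apply]
  ring
end
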